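/- arXiv:1408.2210 — 2 statements merged into one kernel-verified Lean document; each statement's English description precedes it below -/
import Mathlib

section
/- Let S be a set of primes with |{p ∈ S : p ≤ x}| = o(x/(log x)^{9/8}). Then S is weakly regular of Dirichlet density 0; that is, the function z ↦ ∑_{p ∈ S} p^{-z}, a priori holomorphic on Re(z) > 1, extends continuously to the closed half-plane Re(z) ≥ 1. -/
/-!
Cut ℕ into the dyadic blocks `[2^k, 2^(k+1))`. On the `k`-th block every `1/n` is at most `2^(-k)`
and, by the counting hypothesis, `S` has `O(2^k / k^(9/8))` elements there, so the block contributes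
`O(k^(-9/8))` to `∑_{p ∈ S} 1/p`, which therefore converges. As `|p^(-z)| ≤ 1/p` for `Re z ≥ 1`, the
Weierstrass M-test makes the series `∑_{p ∈ S} p^(-z)` itself converge uniformly on the closed
half-plane: it is continuous there and holomorphic on the open half-plane.
-/

open Filter Finset Complex
open scoped Classical

theorem summable_of_summable_sum_Ico_two_pow {f : ℕ → ℝ} (hf : ∀ n, 0 ≤ f n)
    (h : Summable fun k => ∑ n ∈ Ico (2 ^ k) (2 ^ (k + 1)), f n) : Summable f := by
  have hpartial : ∀ K, ∑ n ∈ range (2 ^ K), f n =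
      f 0 + ∑ k ∈ range K, ∑ n ∈ Ico (2 ^ k) (2 ^ (k + 1)), f n := by
    intro K
    induction K with
    | zero => simp
    | succ K ih =>
      rw [sum_range_succ, ← add_assoc, ← ih, range_eq_Ico, range_eq_Ico,
        sum_Ico_consecutive f (Nat.zero_le _) (Nat.pow_le_pow_right two_pos K.le_succ)]
  refine summable_of_sum_range_le (c := f 0 + ∑' k, ∑ n ∈ Ico (2 ^ k) (2 ^ (k + 1)), f n) hf
    fun N => ?_
  calc ∑ n ∈ range N, f n ≤ ∑ n ∈ range (2 ^ N), f n :=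
        sum_le_sum_of_subset_of_nonneg (range_subset_range.mpr N.lt_two_pow_self.le)
          fun n _ _ => hf n
    _ = f 0 + ∑ k ∈ range N, ∑ n ∈ Ico (2 ^ k) (2 ^ (k + 1)), f n := hpartial N
    _ ≤ f 0 + ∑' k, ∑ n ∈ Ico (2 ^ k) (2 ^ (k + 1)), f n := by
        gcongr
        exact h.sum_le_tsum _ fun k _ => sum_nonneg fun n _ => hf n

theorem sum_Ico_two_pow_indicator_inv_le (S : Set ℕ) (k : ℕ) :
    ∑ n ∈ Ico (2 ^ k) (2 ^ (k + 1)), S.indicator (fun n : ℕ => (n : ℝ)⁻¹) n ≤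
      (((Icc 1 (2 ^ (k + 1))).filter (· ∈ S)).card : ℝ) / 2 ^ k := by
  calc ∑ n ∈ Ico (2 ^ k) (2 ^ (k + 1)), S.indicator (fun n : ℕ => (n : ℝ)⁻¹) n
      ≤ ∑ n ∈ Ico (2 ^ k) (2 ^ (k + 1)), S.indicator (fun _ : ℕ => ((2 : ℝ) ^ k)⁻¹) n := by
        gcongr with n hn
        exact_mod_cast (mem_Ico.mp hn).1
    _ = (((Ico (2 ^ k) (2 ^ (k + 1))).filter (· ∈ S)).card : ℝ) / 2 ^ k := by
        simp only [Set.indicator_apply, ← sum_filter, sum_const, nsmul_eq_mul, div_eq_mul_inv]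
    _ ≤ (((Icc 1 (2 ^ (k + 1))).filter (· ∈ S)).card : ℝ) / 2 ^ k := by
        gcongr
        intro n hn
        simp only [mem_Ico, mem_Icc] at hn ⊢
        have := Nat.one_le_two_pow (n := k)
        omega

theorem summable_indicator_inv_of_isBoundedUnder {S : Set ℕ} {α : ℝ} (hα : 1 < α)
    (h : IsBoundedUnder (· ≤ ·) atTop fun x : ℕ =>
      (((Icc 1 x).filter (· ∈ S)).card : ℝ) * Real.log x ^ α / x) :
    Summable (S.indicator fun n : ℕ => (n : ℝ)⁻¹) := by
  obtain ⟨C, hC⟩ := h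
  have hnonneg : ∀ n, 0 ≤ S.indicator (fun n : ℕ => (n : ℝ)⁻¹) n :=
    Set.indicator_nonneg fun n _ => inv_nonneg.mpr n.cast_nonneg
  have hpow : Tendsto (fun k : ℕ => 2 ^ (k + 1)) atTop atTop :=
    (tendsto_pow_atTop_atTop_of_one_lt one_lt_two).comp (tendsto_add_atTop_nat 1)
  have hlog2 : 0 < Real.log 2 := Real.log_pos one_lt_two
  refine summable_of_summable_sum_Ico_two_pow hnonneg (.of_norm_bounded_eventually_nat
    (((Real.summable_one_div_nat_add_rpow 1 α).mpr hα).mul_left (2 * C / Real.log 2 ^ α)) ?_)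
  filter_upwards [hpow.eventually (eventually_map.mp hC)] with k hk
  rw [Real.norm_of_nonneg (sum_nonneg fun n _ => hnonneg n)]
  refine (sum_Ico_two_pow_indicator_inv_le S k).trans ?_
  have hlog : Real.log ((2 ^ (k + 1) : ℕ) : ℝ) = (k + 1) * Real.log 2 := by
    push_cast; rw [Real.log_pow]; push_cast; ring
  rw [hlog, Real.mul_rpow (by positivity) hlog2.le, div_le_iff₀ (by positivity)] at hk
  rw [abs_of_pos (by positivity)]
  field_simp
  push_cast at hk
  linear_combination hk

theorem norm_natCast_cpow_neg_le_inv (n : ℕ) {z : ℂ} (hz : 1 ≤ z.re) :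
    ‖(n : ℂ) ^ (-z)‖ ≤ (n : ℝ)⁻¹ := by
  rw [norm_natCast_cpow_of_re_ne_zero n (by rw [neg_re]; linarith), neg_re]
  rcases n.eq_zero_or_pos with rfl | hn
  · simp [Real.zero_rpow (by linarith : -z.re ≠ 0)]
  · rw [← Real.rpow_neg_one]
    exact Real.rpow_le_rpow_of_exponent_le (by exact_mod_cast hn) (by linarith)

theorem neg_ne_zero_of_one_le_re {z : ℂ} (hz : 1 ≤ z.re) : -z ≠ 0 := by
  rw [neg_ne_zero]
  rintro rfl
  norm_num at hz

section

variable {ι : Type*} {n : ι → ℕ}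

theorem differentiableOn_tsum_natCast_cpow_neg (h : Summable fun i => (n i : ℝ)⁻¹) :
    DifferentiableOn ℂ (fun z : ℂ => ∑' i, (n i : ℂ) ^ (-z)) {z | 1 < z.re} :=
  differentiableOn_tsum_of_summable_norm h
    (fun _ _ hz => (differentiableAt_id.neg.const_cpow
      (.inr (neg_ne_zero_of_one_le_re (le_of_lt hz)))).differentiableWithinAt)
    (isOpen_lt continuous_const continuous_re)
    fun i _ hz => norm_natCast_cpow_neg_le_inv (n i) (le_of_lt hz)

theorem continuousOn_tsum_natCast_cpow_neg (h : Summable fun i => (n i : ℝ)⁻¹) :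
    ContinuousOn (fun z : ℂ => ∑' i, (n i : ℂ) ^ (-z)) {z | 1 ≤ z.re} :=
  continuousOn_tsum
    (fun _ _ hz => (continuousAt_id.neg.const_cpow
      (.inr (neg_ne_zero_of_one_le_re hz))).continuousWithinAt)
    h fun i _ hz => norm_natCast_cpow_neg_le_inv (n i) hz

end

theorem sparse_primes_weakly_regular_density_zero_general
    (S : Set ℕ)
    (hcount : Tendsto (fun x : ℕ =>
        (((Finset.Icc 1 x).filter (fun p => p ∈ S)).card : ℝ) *
          (Real.log x) ^ ((9 : ℝ)/8) / (x : ℝ)) atTop (nhds 0)) :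
    ∃ g : ℂ → ℂ,
      DifferentiableOn ℂ g {z : ℂ | 1 < z.re} ∧
      ContinuousOn g {z : ℂ | 1 ≤ z.re} ∧
      ∀ z : ℂ, 1 < z.re →
        ∑' p : S, (((p : ℕ) : ℂ)) ^ (-z) = g z := by
  have hsum : Summable fun p : S => ((p : ℕ) : ℝ)⁻¹ :=
    summable_subtype_iff_indicator.mpr
      (summable_indicator_inv_of_isBoundedUnder (by norm_num) hcount.isBoundedUnder_le)
  exact ⟨_, differentiableOn_tsum_natCast_cpow_neg hsum,
    continuousOn_tsum_natCast_cpow_neg hsum, fun _ _ => rfl⟩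

theorem sparse_primes_weakly_regular_density_zero
    (S : Set ℕ) (hS : ∀ p ∈ S, Nat.Prime p)
    (hcount : Tendsto (fun x : ℕ =>
        (((Finset.Icc 1 x).filter (fun p => p ∈ S)).card : ℝ) *
          (Real.log x) ^ ((9 : ℝ)/8) / (x : ℝ)) atTop (nhds 0)) :
    ∃ g : ℂ → ℂ,
      DifferentiableOn ℂ g {z : ℂ | 1 < z.re} ∧
      ContinuousOn g {z : ℂ | 1 ≤ z.re} ∧
      ∀ z : ℂ, 1 < z.re →
        ∑' p : S, (((p : ℕ) : ℂ)) ^ (-z) = g z :=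
  sparse_primes_weakly_regular_density_zero_general S hcount
end

section
/- Let S be a set of primes that is weakly regular of Dirichlet density 0, i.e. z ↦ ∑_{p ∈ S} p^{-z} extends continuously from {Re(z) > 1} to {Re(z) ≥ 1}. Then ∑_{p ∈ S} 1/p converges. -/
open Filter Complex

theorem weakly_regular_density_zero_summable
    (S : Set ℕ) (hS : ∀ p ∈ S, Nat.Prime p)
    (hreg : ∃ g : ℂ → ℂ,
      DifferentiableOn ℂ g {z : ℂ | 1 < z.re} ∧
      ContinuousOn g {z : ℂ | 1 ≤ z.re} ∧
      ∀ z : ℂ, 1 < z.re → ∑' p : S, (((p : ℕ) : ℂ)) ^ (-z) = g z) :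
    Summable (fun p : S => 1 / ((p : ℕ) : ℝ)) := by
  obtain ⟨g, hdiff, hcont, heq⟩ := hreg
  -- For real x > 1, the real sum is summable
  have hsum : ∀ x : ℝ, 1 < x → Summable (fun p : S => ((p : ℕ) : ℝ) ^ (-x)) := by
    intro x hx
    have : Summable (fun n : ℕ => (n : ℝ) ^ (-x)) :=
      Real.summable_nat_rpow.mpr (by linarith)
    exact this.subtype S
  -- For real x > 1, the real sum is ≤ ‖g x‖
  have hle : ∀ x : ℝ, 1 < x → ∑' p : S, ((p : ℕ) : ℝ) ^ (-x) ≤ ‖g x‖ := by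
    intro x hx
    have h1 : ((∑' p : S, ((p : ℕ) : ℝ) ^ (-x) : ℝ) : ℂ) = g x := by
      rw [Complex.ofReal_tsum]
      rw [← heq x (by simpa using hx)]
      refine tsum_congr fun p => ?_
      rw [← Complex.ofReal_neg, Complex.ofReal_cpow (Nat.cast_nonneg _)]
      norm_cast
    calc ∑' p : S, ((p : ℕ) : ℝ) ^ (-x) ≤ ‖((∑' p : S, ((p : ℕ) : ℝ) ^ (-x) : ℝ) : ℂ)‖ := by
          rw [Complex.norm_real]; exact le_abs_self _
      _ = ‖g x‖ := by rw [h1]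
  -- the filter of reals approaching 1 from above
  set l : Filter ℝ := nhdsWithin 1 (Set.Ioi 1) with hl
  have hlne : l.NeBot := nhdsGT_neBot 1
  -- ‖g x‖ → ‖g 1‖ along l
  have hg1 : Tendsto (fun x : ℝ => ‖g x‖) l (nhds ‖g 1‖) := by
    have h2 : Tendsto (fun x : ℝ => (x : ℂ)) l (nhdsWithin 1 {z : ℂ | 1 ≤ z.re}) := by
      apply tendsto_nhdsWithin_of_tendsto_nhds_of_eventually_within
      · exact Complex.continuous_ofReal.continuousAt.tendsto.mono_left nhdsWithin_le_nhds
      · filter_upwards [self_mem_nhdsWithin] with x hx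
        simp only [Set.mem_setOf_eq, Complex.ofReal_re]
        exact le_of_lt hx
    have h3 : ContinuousWithinAt g {z : ℂ | 1 ≤ z.re} 1 :=
      hcont 1 (by simp)
    exact (continuous_norm.continuousAt.tendsto.comp (h3.tendsto.comp h2))
  -- key bound on finite sums
  refine summable_of_sum_le (c := ‖g 1‖) (fun p => by positivity) ?_
  intro u
  -- the finite sum over u of x ↦ p^{-x} tends to the finite sum of 1/p
  have hfin : Tendsto (fun x : ℝ => ∑ p ∈ u, ((p : ℕ) : ℝ) ^ (-x)) l
      (nhds (∑ p ∈ u, 1 / ((p : ℕ) : ℝ))) := by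
    have : Tendsto (fun x : ℝ => ∑ p ∈ u, ((p : ℕ) : ℝ) ^ (-x)) l
        (nhds (∑ p ∈ u, ((p : ℕ) : ℝ) ^ (-(1:ℝ)))) := by
      refine Tendsto.mono_left ?_ nhdsWithin_le_nhds
      apply tendsto_finset_sum
      intro p _
      have hp : (0:ℝ) < ((p : ℕ) : ℝ) := by
        exact_mod_cast (hS p p.2).pos
      have hc : ContinuousAt (fun x : ℝ => ((p : ℕ) : ℝ) ^ (-x)) 1 :=
        ContinuousAt.rpow continuousAt_const continuousAt_id.neg (Or.inl (by positivity))
      exact hc.tendsto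
    simpa [Real.rpow_neg_one, one_div] using this
  -- finite sum ≤ ‖g x‖ eventually
  have hev : ∀ᶠ x : ℝ in l, ∑ p ∈ u, ((p : ℕ) : ℝ) ^ (-x) ≤ ‖g x‖ := by
    filter_upwards [self_mem_nhdsWithin] with x hx
    have hx1 : 1 < x := hx
    calc ∑ p ∈ u, ((p : ℕ) : ℝ) ^ (-x)
        ≤ ∑' p : S, ((p : ℕ) : ℝ) ^ (-x) :=
          Summable.sum_le_tsum u (fun p _ => by positivity) (hsum x hx1)
      _ ≤ ‖g x‖ := hle x hx1
  exact le_of_tendsto_of_tendsto hfin hg1 hev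
end
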